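/- For every s, v ∈ V with v ≠ s: Δ_{s•}(v) = Σ_{w : v ∈ P_s(w) and w ∈ T(s)} (σ_{sv}/σ_{sw}) · (1 + Δ_{s•}(w)) + Σ_{w : v ∈ P_s(w) and w ∉ T(s)} (σ_{sv}/σ_{sw}) · Δ_{s•}(w). -/

import Mathlib

open scoped BigOperators

/-- A directed graph on vertex set `V` with positive real edge weights. -/
structure WDigraph (V : Type*) where
  /-- the edge relation -/
  E : V → V → Prop
  /-- the edge weights -/
  w : V → V → ℝ
  /-- weights of edges are positive -/
  pos : ∀ a b, E a b → 0 < w a b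

namespace WDigraph

variable {V : Type*} [Fintype V] [DecidableEq V]

/-- `p` is a simple path from `s` to `t` in `G`: a nonempty list of pairwise
distinct vertices starting at `s`, ending at `t`, consecutive vertices joined
by edges. (Since all weights are positive, every shortest path is simple, so
it suffices to consider simple paths throughout.) -/
def IsPath (G : WDigraph V) (s t : V) (p : List V) : Prop :=
  List.Chain' G.E p ∧ p.head? = some s ∧ p.getLast? = some t ∧ p.Nodup

/-- The total weight of a list of vertices (sum of the weights of consecutive pairs). -/
def pw (G : WDigraph V) : List V → ℝ
  | [] => 0
  | [_] => 0
  | a :: b :: r => G.w a b + G.pw (b :: r)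

/-- `d(s,t)`: shortest-path distance from `s` to `t`, equal to `⊤` (infinity)
if `t` is unreachable from `s`. -/
noncomputable def dist (G : WDigraph V) (s t : V) : EReal :=
  sInf ((fun p => (G.pw p : EReal)) '' {p | G.IsPath s t p})

/-- The set of shortest `s`-`t` paths in `G`. -/
def SP (G : WDigraph V) (s t : V) : Set (List V) :=
  {p | G.IsPath s t p ∧ (G.pw p : EReal) = G.dist s t}

/-- `σ_{st}`: the number of shortest `s`-`t` paths in `G`. -/
noncomputable def sigma (G : WDigraph V) (s t : V) : ℕ :=
  (G.SP s t).ncard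

/-- `σ_{st}(v)`: the number of shortest `s`-`t` paths in `G` that contain `v`. -/
noncomputable def sigmaV (G : WDigraph V) (s t v : V) : ℕ :=
  {p ∈ G.SP s t | v ∈ p}.ncard

/-- `σ_{st}(v,w)`: the number of shortest `s`-`t` paths in `G` using the edge `(v,w)`. -/
noncomputable def sigmaE (G : WDigraph V) (s t v w : V) : ℕ :=
  {p ∈ G.SP s t | [v, w] <:+: p}.ncard

/-- `P_s(t)`: the set of predecessors of `t` with respect to source `s`:
nodes `y` with `(y,t) ∈ E` and `d(s,y) + ω(y,t) = d(s,t) < ∞`. -/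
def pred (G : WDigraph V) (s t : V) : Set V :=
  {y | G.E y t ∧ G.dist s y + (G.w y t : EReal) = G.dist s t ∧ G.dist s t < ⊤}

/-- `δ_{s•}(v)`: Brandes's one-sided dependency of `s` on `v`
(a summand is `0` whenever its denominator is `0`, which is automatic since
in Lean division by zero yields zero). -/
noncomputable def delta (G : WDigraph V) (s v : V) : ℝ :=
  ∑ᶠ t ∈ {t : V | t ≠ s ∧ t ≠ v}, (G.sigmaV s t v : ℝ) / (G.sigma s t : ℝ)

/-- `c_B(v)`: the betweenness centrality of `v`. -/
noncomputable def bc (G : WDigraph V) (v : V) : ℝ :=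
  ∑ᶠ s ∈ {s : V | s ≠ v}, G.delta s v

/-- `G'` is obtained from `G` by the incremental update `(u, v, ω'(u,v))`:
either a new edge `(u,v) ∉ E` is inserted with positive weight, or the weight
of the existing edge `(u,v)` is decreased; all other edges and weights are
unchanged. (Positivity of all weights is part of the `WDigraph` structure.) -/
structure IsUpdate (G G' : WDigraph V) (u v : V) : Prop where
  /-- the updated edge is present in `G'` -/
  edge' : G'.E u v
  /-- `E' = E ∪ {(u,v)}` -/
  edge_iff : ∀ a b, G'.E a b ↔ G.E a b ∨ a = u ∧ b = v
  /-- `ω'` agrees with `ω` on all edges other than `(u,v)` -/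
  weight_eq : ∀ a b, ¬(a = u ∧ b = v) → G'.w a b = G.w a b
  /-- either an insertion of a new edge, or a weight decrease of an existing one -/
  insert_or_decrease : ¬ G.E u v ∨ (G.E u v ∧ G'.w u v < G.w u v)

/-- `S(t)`: the affected sources of `t`. -/
def affS (G G' : WDigraph V) (t : V) : Set V :=
  {s | G.dist s t > G'.dist s t ∨ G.sigma s t ≠ G'.sigma s t}

/-- `T(s)`: the affected targets of `s`. -/
def affT (G G' : WDigraph V) (s : V) : Set V :=
  {t | G.dist s t > G'.dist s t ∨ G.sigma s t ≠ G'.sigma s t}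

/-- `Δ_{s•}(v) = Σ_{t ∈ T(s), t ≠ v} σ_{st}(v)/σ_{st}`, computed in `G`
(`0`-convention for zero denominators). -/
noncomputable def Delta (G G' : WDigraph V) (s v : V) : ℝ :=
  ∑ᶠ t ∈ {t : V | t ∈ affT G G' s ∧ t ≠ v}, (G.sigmaV s t v : ℝ) / (G.sigma s t : ℝ)

/-- `Δ'_{s•}(v) = Σ_{t ∈ T(s), t ≠ v} σ'_{st}(v)/σ'_{st}`, computed in `G'`
(`0`-convention for zero denominators). -/
noncomputable def Delta' (G G' : WDigraph V) (s v : V) : ℝ :=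
  ∑ᶠ t ∈ {t : V | t ∈ affT G G' s ∧ t ≠ v}, (G'.sigmaV s t v : ℝ) / (G'.sigma s t : ℝ)

/-!
A shortest `s`–`t` path through `x ≠ t` leaves `x` along a unique edge `(x, w)`, and then
`x ∈ P_s(w)`. Cutting shortest `s`–`t` paths at `w` identifies those through `w` with pairs
(shortest `s`–`w` path, tail), and those through the edge `(x, w)` with pairs
(shortest `s`–`x` path, tail), where a tail is a simple path `r` from `w` to `t` with
`d(s,w) + ω(r) = d(s,t)`; so `σ_sw · σ_st(x,w) = σ_sx · σ_st(w)`. Hence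
`σ_st(x)/σ_st = Σ_{x ∈ P_s(w)} (σ_sx/σ_sw) · σ_st(w)/σ_st` for every target `t ≠ x`.
Summing over `t ∈ T(s) \ {x}` and exchanging the sums, the term `t = w` contributes `1` exactly
when `w ∈ T(s)`, and the term `t = x` vanishes because `d(s,x) < d(s,w)`.
-/

theorem _root_.List.exists_append_cons_mem_of_not_nodup {α : Type*} {l : List α}
    (h : ¬ l.Nodup) :
    ∃ a y m, l = a ++ y :: m ∧ y ∈ m := by
  induction l with
  | nil => simp at h
  | cons z l ih =>
    rw [List.nodup_cons, not_and_or, not_not] at h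
    rcases h with h | h
    · exact ⟨[], z, l, rfl, h⟩
    · obtain ⟨a, y, m, rfl, hy⟩ := ih h
      exact ⟨z :: a, y, m, rfl, hy⟩

theorem _root_.List.Nodup.eq_of_pair_infix {α : Type*} {l : List α} {x y z : α} (hl : l.Nodup)
    (hy : [x, y] <:+: l) (hz : [x, z] <:+: l) : y = z := by
  obtain ⟨c, d, rfl⟩ := hy
  obtain ⟨c', d', h⟩ := hz
  simp only [List.append_assoc, List.cons_append, List.nil_append] at hl h
  have hx := List.mem_append.not.1 (List.nodup_cons.1 (List.nodup_middle.1 hl)).1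
  simp only [not_or] at hx
  exact (List.cons_eq_cons.1 ((List.append_cons_inj_of_notMem hx.1 hx.2).1 h.symm).2.2).1

theorem _root_.finsum_mem_eq_indicator_add {α M : Type*} [AddCommMonoid M] {A : Set α}
    (hA : A.Finite) (f : α → M) (v : α) :
    ∑ᶠ t ∈ A, f t = A.indicator f v + ∑ᶠ t ∈ {t | t ∈ A ∧ t ≠ v}, f t := by
  by_cases hv : v ∈ A
  · have hA_eq : A = insert v {t | t ∈ A ∧ t ≠ v} := by
      ext t
      by_cases htv : t = v <;> simp [htv, hv]
    conv_lhs => rw [hA_eq]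
    rw [finsum_mem_insert f (by simp) (hA.subset fun _ ht => ht.1), Set.indicator_of_mem hv]
  · rw [Set.indicator_of_notMem hv, zero_add]
    refine finsum_mem_congr (Set.ext fun t => ?_) fun _ _ => rfl
    exact ⟨fun ht => ⟨ht, fun h => hv (h ▸ ht)⟩, And.left⟩

section Walks

omit [Fintype V] [DecidableEq V]

variable {G : WDigraph V} {s t y : V} {a b l : List V}

theorem pw_append_cons (a : List V) (y : V) (b : List V) :
    G.pw (a ++ y :: b) = G.pw (a ++ [y]) + G.pw (y :: b) := by
  induction a with
  | nil => simp [pw]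
  | cons c a ih =>
    cases a with
    | nil => simp [pw]
    | cons d a => simp only [List.cons_append, pw] at ih ⊢; rw [ih]; ring

theorem pw_nonneg (h : l.IsChain G.E) : 0 ≤ G.pw l := by
  induction h with
  | nil | singleton => simp [pw]
  | cons_cons hE _ ih => simp only [pw]; linarith [G.pos _ _ hE]

theorem pw_pos (h : (y :: l).IsChain G.E) (hl : l ≠ []) : 0 < G.pw (y :: l) := by
  obtain ⟨b, l, rfl⟩ := List.exists_cons_of_ne_nil hl
  rw [List.isChain_cons_cons] at h
  simp only [pw]
  linarith [G.pos _ _ h.1, pw_nonneg h.2]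

def IsWalk (G : WDigraph V) (s t : V) (l : List V) : Prop :=
  l.IsChain G.E ∧ l.head? = some s ∧ l.getLast? = some t

theorem isPath_iff : G.IsPath s t l ↔ G.IsWalk s t l ∧ l.Nodup := by
  simp only [IsPath, IsWalk, and_assoc]; rfl

theorem isWalk_append_cons_iff :
    G.IsWalk s t (a ++ y :: b) ↔ G.IsWalk s y (a ++ [y]) ∧ G.IsWalk y t (y :: b) := by
  rw [IsWalk, IsWalk, IsWalk, List.isChain_split]
  simp only [List.head?_append, List.head?_cons, Option.or_some, Option.some.injEq,
    List.getLast?_append, Option.or_eq_some_iff, List.getLast?_eq_none_iff, reduceCtorEq,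
    false_and, or_false, List.getLast?_singleton, Option.some_or, and_true, true_and]
  tauto

theorem IsPath.exists_eq_cons (h : G.IsPath s t l) : ∃ b, l = s :: b ∧ s ∉ b := by
  obtain ⟨b, rfl⟩ := List.head?_eq_some_iff.1 h.2.1
  exact ⟨b, rfl, (List.nodup_cons.1 h.2.2.2).1⟩

theorem IsPath.exists_eq_append_singleton (h : G.IsPath s t l) : ∃ a, l = a ++ [t] ∧ t ∉ a := by
  obtain ⟨a, rfl⟩ := List.getLast?_eq_some_iff.1 h.2.2.1
  exact ⟨a, rfl, by simpa using (List.nodup_middle.1 h.2.2.2).notMem⟩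

theorem IsPath.eq_nil_of_append_cons (h : G.IsPath s t (a ++ t :: b)) : b = [] := by
  obtain rfl | ⟨c, z, rfl⟩ := b.eq_nil_or_concat
  · rfl
  · have hz : some z = some t := by
      rw [← h.2.2.1, List.concat_eq_append, ← List.cons_append, ← List.append_assoc,
        List.getLast?_concat]
    obtain rfl := Option.some_inj.1 hz
    simpa using (List.nodup_middle.1 h.2.2.2).notMem

theorem IsWalk.exists_shorter_of_not_nodup (hl : G.IsWalk s t l) (hnd : ¬ l.Nodup) :
    ∃ l', G.IsWalk s t l' ∧ l'.length < l.length ∧ G.pw l' < G.pw l := by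
  obtain ⟨a, y, m, rfl, hy⟩ := List.exists_append_cons_mem_of_not_nodup hnd
  obtain ⟨b, c, rfl⟩ := List.append_of_mem hy
  obtain ⟨hay, hcyc⟩ := isWalk_append_cons_iff.1 hl
  obtain ⟨hcycle, hyc⟩ := (isWalk_append_cons_iff (a := y :: b)).1 hcyc
  refine ⟨a ++ y :: c, isWalk_append_cons_iff.2 ⟨hay, hyc⟩, by simp, ?_⟩
  have hpos : 0 < G.pw (y :: b ++ [y]) := pw_pos hcycle.1 (by simp)
  rw [pw_append_cons a y c, pw_append_cons a y (b ++ y :: c), ← List.cons_append,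
    pw_append_cons (y :: b) y c]
  linarith

theorem IsWalk.dist_le {l : List V} (hl : G.IsWalk s t l) : G.dist s t ≤ G.pw l := by
  by_cases hnd : l.Nodup
  · exact sInf_le ⟨l, isPath_iff.2 ⟨hl, hnd⟩, rfl⟩
  · obtain ⟨l', hl', -, hpw⟩ := hl.exists_shorter_of_not_nodup hnd
    exact hl'.dist_le.trans (EReal.coe_le_coe_iff.2 hpw.le)
termination_by l.length

theorem IsWalk.mem_SP (hl : G.IsWalk s t l) (hpw : (G.pw l : EReal) = G.dist s t) :
    l ∈ G.SP s t := by
  refine ⟨isPath_iff.2 ⟨hl, Classical.byContradiction fun hnd => ?_⟩, hpw⟩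
  obtain ⟨l', hl', -, hlt⟩ := hl.exists_shorter_of_not_nodup hnd
  have hle := hl'.dist_le
  rw [← hpw, EReal.coe_le_coe_iff] at hle
  linarith

theorem sigmaV_self (s t : V) : G.sigmaV s t t = G.sigma s t := by
  refine congr_arg Set.ncard (Set.sep_eq_self_iff_mem_true.2 fun p hp => ?_)
  obtain ⟨a, rfl, -⟩ := hp.1.exists_eq_append_singleton
  simp

end Walks

section ShortestPaths

omit [DecidableEq V]

variable {G : WDigraph V} {s t x y : V} {a b p : List V}

theorem isPath_finite (G : WDigraph V) (s t : V) : {p | G.IsPath s t p}.Finite :=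
  (List.finite_length_le V (Fintype.card V)).subset fun _ hp => hp.2.2.2.length_le_card

theorem SP_finite (G : WDigraph V) (s t : V) : (G.SP s t).Finite :=
  (G.isPath_finite s t).subset fun _ hp => hp.1

theorem SP_nonempty_of_dist_lt_top (h : G.dist s t < ⊤) : (G.SP s t).Nonempty := by
  have hpaths : {p | G.IsPath s t p}.Nonempty := by
    by_contra hne
    rw [Set.not_nonempty_iff_eq_empty] at hne
    simp [dist, hne] at h
  obtain ⟨q, hq, hmin⟩ := Set.exists_min_image _ G.pw (G.isPath_finite s t) hpaths
  refine ⟨q, hq, le_antisymm ?_ (sInf_le ⟨q, hq, rfl⟩)⟩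
  refine le_sInf ?_
  rintro _ ⟨p, hp, rfl⟩
  exact EReal.coe_le_coe_iff.2 (hmin p hp)

theorem sigma_ne_zero_of_dist_lt_top (h : G.dist s t < ⊤) : G.sigma s t ≠ 0 :=
  have ⟨_, hq⟩ := SP_nonempty_of_dist_lt_top h
  Set.ncard_ne_zero_of_mem hq (G.SP_finite s t)

def SPSuffix (G : WDigraph V) (s y t : V) : Set (List V) :=
  {r | G.IsPath y t r ∧ G.dist s y + G.pw r = G.dist s t}

theorem append_cons_mem_SP_iff :
    a ++ y :: b ∈ G.SP s t ↔ a ++ [y] ∈ G.SP s y ∧ y :: b ∈ G.SPSuffix s y t := by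
  constructor
  · rintro ⟨hp, hpw⟩
    obtain ⟨hwalk, hnd⟩ := isPath_iff.1 hp
    obtain ⟨hpre, hsuf⟩ := isWalk_append_cons_iff.1 hwalk
    have hdist : G.dist s y = G.pw (a ++ [y]) := by
      obtain ⟨q, hq, hq_pw⟩ :=
        SP_nonempty_of_dist_lt_top (hpre.dist_le.trans_lt (EReal.coe_lt_top _))
      obtain ⟨c, rfl, -⟩ := hq.exists_eq_append_singleton
      have hle := (isWalk_append_cons_iff.2 ⟨(isPath_iff.1 hq).1, hsuf⟩).dist_le
      rw [← hpw, EReal.coe_le_coe_iff, pw_append_cons a y b, pw_append_cons c y b] at hle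
      refine le_antisymm hpre.dist_le ?_
      rw [← hq_pw, EReal.coe_le_coe_iff]
      linarith
    refine ⟨⟨isPath_iff.2 ⟨hpre, hnd.sublist (by simp)⟩, hdist.symm⟩,
      isPath_iff.2 ⟨hsuf, hnd.sublist (List.sublist_append_right a _)⟩, ?_⟩
    rw [hdist, ← hpw, pw_append_cons a y b, EReal.coe_add]
  · rintro ⟨⟨hpre, hpre_pw⟩, hsuf, hsuf_pw⟩
    refine (isWalk_append_cons_iff.2 ⟨(isPath_iff.1 hpre).1, (isPath_iff.1 hsuf).1⟩).mem_SP ?_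
    rw [pw_append_cons a y b, EReal.coe_add, hpre_pw, hsuf_pw]

theorem dist_le_of_mem_SP (hp : p ∈ G.SP s t) (hy : y ∈ p) : G.dist s y ≤ G.dist s t := by
  obtain ⟨a, b, rfl⟩ := List.append_of_mem hy
  obtain ⟨-, hsuf, hsuf_pw⟩ := append_cons_mem_SP_iff.1 hp
  rw [← hsuf_pw]
  exact le_add_of_nonneg_right (EReal.coe_nonneg.2 (pw_nonneg hsuf.1))

theorem dist_lt_of_mem_pred (hx : x ∈ G.pred s y) : G.dist s x < G.dist s y := by
  obtain ⟨hE, hsum, hlt⟩ := hx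
  have hx_top : G.dist s x ≠ ⊤ := by
    rintro h
    rw [h, EReal.top_add_coe] at hsum
    exact hlt.ne hsum.symm
  obtain ⟨q, -, hq_pw⟩ := SP_nonempty_of_dist_lt_top hx_top.lt_top
  rw [← hsum, ← hq_pw, ← EReal.coe_add, EReal.coe_lt_coe_iff]
  linarith [G.pos x y hE]

theorem mem_pred_of_infix_SP (hp : p ∈ G.SP s t) (hxy : [x, y] <:+: p) : x ∈ G.pred s y := by
  obtain ⟨c, d, rfl⟩ := hxy
  obtain ⟨hy_SP, -⟩ := (append_cons_mem_SP_iff (a := c ++ [x])).1 (by simpa using hp)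
  obtain ⟨hx_SP, -⟩ := (append_cons_mem_SP_iff (a := c) (b := [y])).1 (by simpa using hy_SP)
  have hE : G.E x y := List.isChain_pair.1 (hy_SP.1.1.infix ⟨c, [], by simp⟩)
  refine ⟨hE, ?_, ?_⟩
  · rw [← hx_SP.2, ← hy_SP.2, ← EReal.coe_add, List.append_assoc, List.singleton_append,
      pw_append_cons c x [y]]
    simp [pw]
  · rw [← hy_SP.2]
    exact EReal.coe_lt_top _

end ShortestPaths

section Counting

omit [DecidableEq V]

variable {G : WDigraph V} {s t x y : V}

theorem ncard_SP_prefix_mem (Q : Set (List V)) (hQ : Q ⊆ G.SP s y) :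
    {p ∈ G.SP s t | ∃ a b, p = a ++ y :: b ∧ a ++ [y] ∈ Q}.ncard =
      Q.ncard * (G.SPSuffix s y t).ncard := by
  have himage : (fun qr : List V × List V => qr.1.dropLast ++ qr.2) '' Q ×ˢ G.SPSuffix s y t =
      {p ∈ G.SP s t | ∃ a b, p = a ++ y :: b ∧ a ++ [y] ∈ Q} := by
    ext p
    constructor
    · rintro ⟨⟨q, r⟩, ⟨hq, hr⟩, rfl⟩
      obtain ⟨a, rfl, -⟩ := (hQ hq).1.exists_eq_append_singleton
      obtain ⟨b, rfl, -⟩ := hr.1.exists_eq_cons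
      simp only [List.dropLast_concat]
      exact ⟨append_cons_mem_SP_iff.2 ⟨hQ hq, hr⟩, a, b, rfl, hq⟩
    · rintro ⟨hp, a, b, rfl, ha⟩
      exact ⟨(a ++ [y], y :: b), ⟨ha, (append_cons_mem_SP_iff.1 hp).2⟩, by simp⟩
  rw [← himage, Set.InjOn.ncard_image, Set.ncard_prod]
  rintro ⟨q, r⟩ ⟨hq, hr⟩ ⟨q', r'⟩ ⟨hq', hr'⟩ h
  obtain ⟨a, rfl, hya⟩ := (hQ hq).1.exists_eq_append_singleton
  obtain ⟨a', rfl, -⟩ := (hQ hq').1.exists_eq_append_singleton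
  obtain ⟨b, rfl, hyb⟩ := hr.1.exists_eq_cons
  obtain ⟨b', rfl, -⟩ := hr'.1.exists_eq_cons
  simp only [List.dropLast_concat] at h
  obtain ⟨rfl, -, rfl⟩ := (List.append_cons_inj_of_notMem hya hyb).1 h
  rfl

theorem sigmaV_eq_mul (s t y : V) :
    G.sigmaV s t y = G.sigma s y * (G.SPSuffix s y t).ncard := by
  rw [sigmaV, sigma, ← ncard_SP_prefix_mem _ subset_rfl]
  congr 1
  ext p
  constructor
  · rintro ⟨hp, hy⟩
    obtain ⟨a, b, rfl⟩ := List.append_of_mem hy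
    exact ⟨hp, a, b, rfl, (append_cons_mem_SP_iff.1 hp).1⟩
  · rintro ⟨hp, a, b, rfl, -⟩
    exact ⟨hp, by simp⟩

theorem sigmaE_eq_mul (s t x y : V) :
    G.sigmaE s t x y = G.sigmaE s y x y * (G.SPSuffix s y t).ncard := by
  rw [sigmaE, sigmaE, ← ncard_SP_prefix_mem _ (Set.sep_subset _ _)]
  congr 1
  ext p
  constructor
  · rintro ⟨hp, c, d, rfl⟩
    have hp' : (c ++ [x]) ++ y :: d ∈ G.SP s t := by simpa using hp
    exact ⟨hp, c ++ [x], d, by simp, (append_cons_mem_SP_iff.1 hp').1, c, [], by simp⟩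
  · rintro ⟨hp, a, b, rfl, -, hxy⟩
    exact ⟨hp, hxy.trans (List.prefix_append_right_inj a |>.2 (by simp)).isInfix⟩

theorem sigmaE_self (hx : x ∈ G.pred s y) : G.sigmaE s y x y = G.sigma s x := by
  have himage : (· ++ [y]) '' G.SP s x = {q ∈ G.SP s y | [x, y] <:+: q} := by
    ext q'
    constructor
    · rintro ⟨q, hq, rfl⟩
      obtain ⟨c, rfl, -⟩ := hq.1.exists_eq_append_singleton
      have hwalk : G.IsWalk s y (c ++ x :: [y]) :=
        isWalk_append_cons_iff.2 ⟨(isPath_iff.1 hq.1).1, by simp [IsWalk, hx.1]⟩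
      have hmem : c ++ x :: [y] ∈ G.SP s y := hwalk.mem_SP <| by
        rw [pw_append_cons c x [y], ← hx.2.1, ← hq.2]
        simp [pw]
      exact ⟨by simpa using hmem, c, [], by simp⟩
    · rintro ⟨hq', c, d, rfl⟩
      have hq'' : (c ++ [x]) ++ y :: d ∈ G.SP s y := by simpa using hq'
      obtain rfl := hq''.1.eq_nil_of_append_cons
      have hx_SP := ((append_cons_mem_SP_iff (a := c) (b := [y])).1 (by simpa using hq'')).1
      exact ⟨c ++ [x], hx_SP, by simp⟩
  rw [sigmaE, sigma, ← himage, Set.ncard_image_of_injective _ (List.append_left_injective _)]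

theorem sigma_mul_sigmaE (hx : x ∈ G.pred s y) :
    G.sigma s y * G.sigmaE s t x y = G.sigma s x * G.sigmaV s t y := by
  rw [sigmaE_eq_mul, sigmaE_self hx, sigmaV_eq_mul]
  ring

theorem sigmaV_eq_finsum_sigmaE (hxt : x ≠ t) :
    G.sigmaV s t x = ∑ᶠ y ∈ {y | x ∈ G.pred s y}, G.sigmaE s t x y := by
  have hdisj : {y | x ∈ G.pred s y}.PairwiseDisjoint fun y => {p ∈ G.SP s t | [x, y] <:+: p} :=
    fun y _ z _ hyz => Set.disjoint_left.2 fun p ⟨hp, hy⟩ ⟨_, hz⟩ =>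
      hyz (hp.1.2.2.2.eq_of_pair_infix hy hz)
  simp only [sigmaV, sigmaE]
  rw [← (Set.toFinite _).ncard_biUnion
    (fun _ _ => (G.SP_finite s t).subset (Set.sep_subset _ _)) hdisj]
  congr 1
  ext p
  simp only [Set.mem_iUnion, exists_prop]
  constructor
  · rintro ⟨hp, hx⟩
    obtain ⟨a, m, rfl⟩ := List.append_of_mem hx
    obtain ⟨y, b, rfl⟩ : ∃ y b, m = y :: b := by
      refine List.exists_cons_of_ne_nil ?_
      rintro rfl
      exact hxt (by simpa using hp.1.2.2.1)
    have hxy : [x, y] <:+: a ++ x :: y :: b := ⟨a, b, by simp⟩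
    exact ⟨y, mem_pred_of_infix_SP hp hxy, hp, hxy⟩
  · rintro ⟨y, -, hp, hxy⟩
    exact ⟨hp, hxy.subset (by simp)⟩

theorem sigmaV_eq_zero_of_mem_pred (hx : x ∈ G.pred s y) : G.sigmaV s x y = 0 := by
  have hempty : {p ∈ G.SP s x | y ∈ p} = ∅ := Set.eq_empty_of_forall_notMem fun _ hp =>
    (dist_le_of_mem_SP hp.1 hp.2).not_gt (dist_lt_of_mem_pred hx)
  rw [sigmaV, hempty, Set.ncard_empty]

end Counting

section Recursion

omit [DecidableEq V]

variable {G : WDigraph V} {s t x y : V}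

noncomputable def deltaOn (G : WDigraph V) (A : Set V) (s v : V) : ℝ :=
  ∑ᶠ t ∈ {t | t ∈ A ∧ t ≠ v}, (G.sigmaV s t v : ℝ) / (G.sigma s t : ℝ)

theorem sigmaV_div_sigma_eq_finsum (hxt : x ≠ t) :
    (G.sigmaV s t x : ℝ) / G.sigma s t =
      ∑ᶠ y ∈ {y | x ∈ G.pred s y},
        (G.sigma s x : ℝ) / G.sigma s y * ((G.sigmaV s t y : ℝ) / G.sigma s t) := by
  rw [sigmaV_eq_finsum_sigmaE hxt, Nat.cast_finsum_mem (Set.toFinite _), div_eq_mul_inv,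
    finsum_mem_mul]
  refine finsum_mem_congr rfl fun y hy => ?_
  have hy0 : (G.sigma s y : ℝ) ≠ 0 := Nat.cast_ne_zero.2 (sigma_ne_zero_of_dist_lt_top hy.2.2)
  have hcross : (G.sigma s y : ℝ) * G.sigmaE s t x y = G.sigma s x * G.sigmaV s t y := by
    exact_mod_cast sigma_mul_sigmaE hy
  rw [show (G.sigmaE s t x y : ℝ) = G.sigma s x * G.sigmaV s t y / G.sigma s y by
    rw [eq_div_iff hy0]; linarith]
  ring

theorem finsum_sigmaV_div_sigma_of_mem_pred (A : Set V) (hx : x ∈ G.pred s y) :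
    ∑ᶠ t ∈ {t | t ∈ A ∧ t ≠ x}, (G.sigmaV s t y : ℝ) / G.sigma s t =
      A.indicator 1 y + G.deltaOn A s y := by
  have hy : (G.sigmaV s y y : ℝ) / G.sigma s y = 1 := by
    rw [sigmaV_self, div_self (Nat.cast_ne_zero.2 (sigma_ne_zero_of_dist_lt_top hx.2.2))]
  have hx0 : A.indicator (fun t => (G.sigmaV s t y : ℝ) / G.sigma s t) x = 0 := by
    simp [sigmaV_eq_zero_of_mem_pred hx]
  have hy1 : A.indicator (fun t => (G.sigmaV s t y : ℝ) / G.sigma s t) y = A.indicator 1 y := by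
    by_cases hyA : y ∈ A <;> simp [hyA, hy]
  rw [deltaOn, ← hy1, ← finsum_mem_eq_indicator_add (Set.toFinite A),
    finsum_mem_eq_indicator_add (Set.toFinite A) _ x, hx0, zero_add]

theorem deltaOn_recursion (A : Set V) (s x : V) :
    G.deltaOn A s x =
      (∑ᶠ w ∈ {w | x ∈ G.pred s w ∧ w ∈ A},
        (G.sigma s x : ℝ) / G.sigma s w * (1 + G.deltaOn A s w)) +
      ∑ᶠ w ∈ {w | x ∈ G.pred s w ∧ w ∉ A},
        (G.sigma s x : ℝ) / G.sigma s w * G.deltaOn A s w := by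
  set P := {w | x ∈ G.pred s w}
  calc G.deltaOn A s x
      = ∑ᶠ t ∈ {t | t ∈ A ∧ t ≠ x}, ∑ᶠ w ∈ P,
          (G.sigma s x : ℝ) / G.sigma s w * ((G.sigmaV s t w : ℝ) / G.sigma s t) :=
        finsum_mem_congr rfl fun t ht => sigmaV_div_sigma_eq_finsum ht.2.symm
    _ = ∑ᶠ w ∈ P, (G.sigma s x : ℝ) / G.sigma s w *
          ∑ᶠ t ∈ {t | t ∈ A ∧ t ≠ x}, (G.sigmaV s t w : ℝ) / G.sigma s t := by
        rw [finsum_mem_comm _ (Set.toFinite _) (Set.toFinite _)]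
        simp only [mul_finsum_mem]
    _ = ∑ᶠ w ∈ P, (G.sigma s x : ℝ) / G.sigma s w * (A.indicator 1 w + G.deltaOn A s w) :=
        finsum_mem_congr rfl fun w hw => by rw [finsum_sigmaV_div_sigma_of_mem_pred A hw]
    _ = _ := by
        rw [← finsum_mem_inter_add_sdiff A (Set.toFinite P)]
        congr 1 <;> refine finsum_mem_congr rfl fun w hw => ?_
        · simp [Set.indicator_of_mem hw.2]
        · simp [Set.indicator_of_notMem hw.2]

end Recursion

theorem Delta_recursion_general (G G' : WDigraph V) (s x : V) :
    Delta G G' s x =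
      (∑ᶠ w ∈ {w : V | x ∈ G.pred s w ∧ w ∈ affT G G' s},
        (G.sigma s x : ℝ) / (G.sigma s w : ℝ) * (1 + Delta G G' s w)) +
      ∑ᶠ w ∈ {w : V | x ∈ G.pred s w ∧ w ∉ affT G G' s},
        (G.sigma s x : ℝ) / (G.sigma s w : ℝ) * Delta G G' s w :=
  G.deltaOn_recursion (affT G G' s) s x

/-- For every `s, x ∈ V` with `x ≠ s`:
`Δ_{s•}(x) = Σ_{w : x ∈ P_s(w), w ∈ T(s)} (σ_{sx}/σ_{sw})·(1 + Δ_{s•}(w))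
           + Σ_{w : x ∈ P_s(w), w ∉ T(s)} (σ_{sx}/σ_{sw})·Δ_{s•}(w)`. -/
theorem Delta_recursion (G G' : WDigraph V) (u v : V)
    (h : IsUpdate G G' u v) (s x : V) (hxs : x ≠ s) :
    Delta G G' s x =
      (∑ᶠ w ∈ {w : V | x ∈ G.pred s w ∧ w ∈ affT G G' s},
        (G.sigma s x : ℝ) / (G.sigma s w : ℝ) * (1 + Delta G G' s w)) +
      ∑ᶠ w ∈ {w : V | x ∈ G.pred s w ∧ w ∉ affT G G' s},
        (G.sigma s x : ℝ) / (G.sigma s w : ℝ) * Delta G G' s w :=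
  Delta_recursion_general G G' s x

end WDigraph
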